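/- For all Θ = (θ₁,…,θ_k) and Θ′ = (θ′₁,…,θ′_k) in ([−M,M]^p)^k, sup over x ∈ [−M,M]^p of |f_Θ(x) − f_{Θ′}(x)| is at most 4 τ H_p M √p · Σ_{j=1}^k ‖θ_j − θ′_j‖₂. -/

import Mathlib

/-! Writing `d = d_φ`, the three-point identity
`d(x,θ) - d(x,θ') = ⟪∇φ θ' - ∇φ θ, x - θ⟫ - d(θ,θ')` together with
`0 ≤ d(θ,θ') ≤ d(θ,θ') + d(θ',θ) = ⟪∇φ θ - ∇φ θ', θ - θ'⟫` (convexity) gives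
`|d(x,θ) - d(x,θ')| ≤ ‖∇φ θ - ∇φ θ'‖ (‖x - θ‖ + ‖θ - θ'‖) ≤ H ‖θ - θ'‖ · 4M√p`,
as the cube has diameter `2M√p`. Since the divergences are nonnegative, the `ℓ¹`-Lipschitz
bound on `Ψ` applies and sums these estimates over the centroids. -/

open MeasureTheory ProbabilityTheory Real Filter
open scoped ENNReal

/-- Bregman divergence generated by a differentiable function `φ`. -/
noncomputable def dphi {p : ℕ} (φ : EuclideanSpace ℝ (Fin p) → ℝ)
    (x y : EuclideanSpace ℝ (Fin p)) : ℝ :=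
  φ x - φ y - inner ℝ (gradient φ y) (x - y)

/-- The cube `[-M, M]^p` in `ℝ^p`. -/
def cube (p : ℕ) (M : ℝ) : Set (EuclideanSpace ℝ (Fin p)) := {x | ∀ i, |x i| ≤ M}

/-- The clustering objective `f_Θ(x) = Ψ(d_φ(x,θ₁),…,d_φ(x,θ_k))`. -/
noncomputable def fTheta {p k : ℕ} (φ : EuclideanSpace ℝ (Fin p) → ℝ)
    (Ψ : (Fin k → ℝ) → ℝ) (Θ : Fin k → EuclideanSpace ℝ (Fin p))
    (x : EuclideanSpace ℝ (Fin p)) : ℝ :=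
  Ψ (fun j => dphi φ x (Θ j))

theorem ConvexOn.hasFDerivAt_sub_le {E : Type*} [NormedAddCommGroup E] [NormedSpace ℝ E]
    {s : Set E} {f : E → ℝ} {f' : E →L[ℝ] ℝ} {x y : E} (hf : ConvexOn ℝ s f)
    (hx : x ∈ s) (hy : y ∈ s) (hf' : HasFDerivAt f f' y) :
    f' (x - y) ≤ f x - f y := by
  have hline :
      ConvexOn ℝ (AffineMap.lineMap (k := ℝ) y x ⁻¹' s) (f ∘ AffineMap.lineMap y x) :=
    hf.comp_affineMap _
  have hderiv : HasDerivAt (f ∘ AffineMap.lineMap y x) (f' (x - y)) (0 : ℝ) := by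
    refine HasFDerivAt.comp_hasDerivAt _ ?_ AffineMap.hasDerivAt_lineMap
    simpa using hf'
  simpa [slope_def_field] using
    hline.le_slope_of_hasDerivAt (by simpa using hy) (by simpa using hx) one_pos hderiv

theorem ConvexOn.inner_gradient_sub_le {E : Type*} [NormedAddCommGroup E] [InnerProductSpace ℝ E]
    [CompleteSpace E] {s : Set E} {f : E → ℝ} {x y : E} (hf : ConvexOn ℝ s f)
    (hx : x ∈ s) (hy : y ∈ s) (hfy : DifferentiableAt ℝ f y) :
    inner ℝ (gradient f y) (x - y) ≤ f x - f y := by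
  simpa [gradient] using hf.hasFDerivAt_sub_le hx hy hfy.hasFDerivAt

theorem EuclideanSpace.norm_le_sqrt_card_mul {ι : Type*} [Fintype ι] {v : EuclideanSpace ℝ ι}
    {C : ℝ} (hv : ∀ i, |v i| ≤ C) : ‖v‖ ≤ √(Fintype.card ι) * C := by
  rcases isEmpty_or_nonempty ι with hι | ⟨⟨i₀⟩⟩
  · simp [Subsingleton.elim v 0]
  have hC : 0 ≤ C := (abs_nonneg _).trans (hv i₀)
  rw [EuclideanSpace.norm_eq, ← Real.sqrt_sq hC, ← Real.sqrt_mul (Nat.cast_nonneg _)]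
  gcongr
  calc ∑ i, ‖v i‖ ^ 2 ≤ ∑ _i : ι, C ^ 2 := by
        gcongr with i; exact hv i
    _ = _ := by simp

section Bregman

variable {p : ℕ} {φ : EuclideanSpace ℝ (Fin p) → ℝ}

theorem dphi_nonneg (hφ : ConvexOn ℝ Set.univ φ) {y : EuclideanSpace ℝ (Fin p)}
    (hφy : DifferentiableAt ℝ φ y) (x : EuclideanSpace ℝ (Fin p)) : 0 ≤ dphi φ x y := by
  have := hφ.inner_gradient_sub_le (Set.mem_univ x) (Set.mem_univ y) hφy
  rw [dphi]
  linarith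

theorem dphi_sub_dphi (x θ θ' : EuclideanSpace ℝ (Fin p)) :
    dphi φ x θ - dphi φ x θ' =
      inner ℝ (gradient φ θ' - gradient φ θ) (x - θ) - dphi φ θ θ' := by
  simp only [dphi, inner_sub_left, inner_sub_right]
  ring

theorem dphi_add_dphi_swap (θ θ' : EuclideanSpace ℝ (Fin p)) :
    dphi φ θ θ' + dphi φ θ' θ = inner ℝ (gradient φ θ - gradient φ θ') (θ - θ') := by
  simp only [dphi, inner_sub_left, inner_sub_right]
  ring

theorem abs_dphi_sub_dphi_le (hφ : ConvexOn ℝ Set.univ φ) {θ θ' : EuclideanSpace ℝ (Fin p)}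
    (hφθ : DifferentiableAt ℝ φ θ) (hφθ' : DifferentiableAt ℝ φ θ')
    (x : EuclideanSpace ℝ (Fin p)) :
    |dphi φ x θ - dphi φ x θ'| ≤
      ‖gradient φ θ - gradient φ θ'‖ * (‖x - θ‖ + ‖θ - θ'‖) := by
  have hθθ' := dphi_nonneg hφ hφθ' θ
  have hθ'θ := dphi_nonneg hφ hφθ θ'
  have hcross : |inner ℝ (gradient φ θ' - gradient φ θ) (x - θ)| ≤
      ‖gradient φ θ - gradient φ θ'‖ * ‖x - θ‖ := by
    rw [norm_sub_rev]
    exact abs_real_inner_le_norm _ _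
  have hsymm : dphi φ θ θ' ≤ ‖gradient φ θ - gradient φ θ'‖ * ‖θ - θ'‖ := by
    have := real_inner_le_norm (gradient φ θ - gradient φ θ') (θ - θ')
    linarith [dphi_add_dphi_swap (φ := φ) θ θ']
  rw [dphi_sub_dphi, mul_add]
  calc _ ≤ |inner ℝ (gradient φ θ' - gradient φ θ) (x - θ)| + |dphi φ θ θ'| :=
        abs_sub _ _
    _ ≤ _ := by rw [abs_of_nonneg hθθ']; linarith

end Bregman

theorem norm_sub_le_of_mem_cube {p : ℕ} {M : ℝ} {u v : EuclideanSpace ℝ (Fin p)}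
    (hu : u ∈ cube p M) (hv : v ∈ cube p M) : ‖u - v‖ ≤ 2 * M * √p := by
  have h : ∀ i, |(u - v) i| ≤ 2 * M := fun i =>
    calc |u i - v i| ≤ |u i| + |v i| := abs_sub _ _
      _ ≤ 2 * M := by linarith [hu i, hv i]
  simpa [mul_comm] using EuclideanSpace.norm_le_sqrt_card_mul h

theorem fTheta_lipschitz_in_centroids_general
    {p k : ℕ} {M : ℝ}
    (φ : EuclideanSpace ℝ (Fin p) → ℝ)
    (hφconv : ConvexOn ℝ Set.univ φ) (hφdiff : Differentiable ℝ φ)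
    {H : ℝ}
    (hgradlip : ∀ x ∈ cube p M, ∀ y ∈ cube p M,
      ‖gradient φ x - gradient φ y‖ ≤ H * ‖x - y‖)
    (Ψ : (Fin k → ℝ) → ℝ)
    {τ : ℝ} (hτ : 0 < τ)
    (hΨlip : ∀ u v : Fin k → ℝ, (∀ j, 0 ≤ u j) → (∀ j, 0 ≤ v j) →
      |Ψ u - Ψ v| ≤ τ * ∑ j, |u j - v j|)
    :
    ∀ Θ Θ' : Fin k → EuclideanSpace ℝ (Fin p),
      (∀ j, Θ j ∈ cube p M) → (∀ j, Θ' j ∈ cube p M) →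
      ∀ x ∈ cube p M,
        |fTheta φ Ψ Θ x - fTheta φ Ψ Θ' x| ≤
          4 * τ * H * M * Real.sqrt p * ∑ j, ‖Θ j - Θ' j‖ := by
  intro Θ Θ' hΘ hΘ' x hx
  have hdphi (j : Fin k) :
      |dphi φ x (Θ j) - dphi φ x (Θ' j)| ≤ 4 * H * M * √p * ‖Θ j - Θ' j‖ := by
    have hlip := hgradlip _ (hΘ j) _ (hΘ' j)
    calc _ ≤ ‖gradient φ (Θ j) - gradient φ (Θ' j)‖ *
            (‖x - Θ j‖ + ‖Θ j - Θ' j‖) :=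
          abs_dphi_sub_dphi_le hφconv (hφdiff _) (hφdiff _) x
      _ ≤ H * ‖Θ j - Θ' j‖ * (2 * M * √p + 2 * M * √p) :=
          mul_le_mul hlip (add_le_add (norm_sub_le_of_mem_cube hx (hΘ j))
            (norm_sub_le_of_mem_cube (hΘ j) (hΘ' j))) (by positivity)
            ((norm_nonneg _).trans hlip)
      _ = 4 * H * M * √p * ‖Θ j - Θ' j‖ := by ring
  have hnonneg (Θ : Fin k → EuclideanSpace ℝ (Fin p)) (j : Fin k) : 0 ≤ dphi φ x (Θ j) :=
    dphi_nonneg hφconv (hφdiff _) x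
  calc |fTheta φ Ψ Θ x - fTheta φ Ψ Θ' x|
      ≤ τ * ∑ j, |dphi φ x (Θ j) - dphi φ x (Θ' j)| := hΨlip _ _ (hnonneg Θ) (hnonneg Θ')
    _ ≤ τ * ∑ j, 4 * H * M * √p * ‖Θ j - Θ' j‖ := by gcongr with j; exact hdphi j
    _ = 4 * τ * H * M * √p * ∑ j, ‖Θ j - Θ' j‖ := by rw [← Finset.mul_sum]; ring

/-- `f_Θ` is Lipschitz in the centroid configuration `Θ`, uniformly over the
cube: `sup_{x ∈ [-M,M]^p} |f_Θ(x) - f_{Θ'}(x)| ≤ 4 τ H M √p ∑_j ‖θ_j - θ'_j‖₂`. -/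
theorem fTheta_lipschitz_in_centroids
    {p k : ℕ} (hp : 0 < p) (hk : 0 < k) {M : ℝ} (hM : 0 < M)
    (φ : EuclideanSpace ℝ (Fin p) → ℝ)
    (hφconv : ConvexOn ℝ Set.univ φ) (hφdiff : Differentiable ℝ φ)
    (hφzero : φ 0 = 0) (hgradzero : gradient φ 0 = 0)
    {H : ℝ} (hH : 0 ≤ H)
    (hgradlip : ∀ x ∈ cube p M, ∀ y ∈ cube p M,
      ‖gradient φ x - gradient φ y‖ ≤ H * ‖x - y‖)
    (Ψ : (Fin k → ℝ) → ℝ)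
    (hΨnonneg : ∀ u : Fin k → ℝ, (∀ j, 0 ≤ u j) → 0 ≤ Ψ u)
    (hΨmono : ∀ u v : Fin k → ℝ, (∀ j, 0 ≤ u j) → (∀ j, u j ≤ v j) → Ψ u ≤ Ψ v)
    (hΨzero : Ψ 0 = 0)
    {τ : ℝ} (hτ : 0 < τ)
    (hΨlip : ∀ u v : Fin k → ℝ, (∀ j, 0 ≤ u j) → (∀ j, 0 ≤ v j) →
      |Ψ u - Ψ v| ≤ τ * ∑ j, |u j - v j|)
    :
    ∀ Θ Θ' : Fin k → EuclideanSpace ℝ (Fin p),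
      (∀ j, Θ j ∈ cube p M) → (∀ j, Θ' j ∈ cube p M) →
      ∀ x ∈ cube p M,
        |fTheta φ Ψ Θ x - fTheta φ Ψ Θ' x| ≤
          4 * τ * H * M * Real.sqrt p * ∑ j, ‖Θ j - Θ' j‖ :=
  fTheta_lipschitz_in_centroids_general φ hφconv hφdiff hgradlip Ψ hτ hΨlip
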